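/- In Lorentz–Minkowski space E₁³, a C² regular spacelike unit-speed curve α with RM frame {t, n₁, n₂} (n₁ timelike, ε₁ = −1) lies on a light-cone C²(P) = {x : ⟨x−P, x−P⟩₁ = 0} if and only if there exists a constant a₁ with 1 + a₁κ₁(s) ± a₁κ₂(s) = 0 for all s (i.e., the normal development lies on a line of the form a₁X ± a₁Y + 1 = 0). -/

import Mathlib

/-!
Write `β = α - P`. If `β` is lightlike along the curve, differentiating `⟨β, β⟩₁ = 0` gives
`⟨β, t⟩₁ = 0`; differentiating again gives `1 - κ₁ ⟨β, n₁⟩₁ + κ₂ ⟨β, n₂⟩₁ = 0`, while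
`⟨β, nᵢ⟩₁' = ⟨t, nᵢ⟩₁ - κᵢ ⟨β, t⟩₁ = 0`, so `⟨β, n₁⟩₁ = p` and `⟨β, n₂⟩₁ = q` are constants.
Expanding `β` in the frame, `0 = ⟨β, β⟩₁ = -p² + q²`, hence `q = ±p`.
Conversely, if `1 + a κ₁ + b κ₂ = 0` with `b = ±a`, then `α - a n₁ - b n₂` has derivative
`(1 + a κ₁ + b κ₂) t = 0`, so it is a constant `P`, and `⟨α - P, α - P⟩₁ = -a² + b² = 0`.
-/

/-- The Lorentz–Minkowski inner product of index 1 on `ℝ³`. -/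
noncomputable def mdot (x y : Fin 3 → ℝ) : ℝ := x 0 * y 0 + x 1 * y 1 - x 2 * y 2

open Matrix

lemma mdot_comm (x y : Fin 3 → ℝ) : mdot x y = mdot y x := by
  simp only [mdot]; ring

lemma mdot_add_right (x y z : Fin 3 → ℝ) : mdot x (y + z) = mdot x y + mdot x z := by
  simp only [mdot, Pi.add_apply]; ring

lemma mdot_sub_right (x y z : Fin 3 → ℝ) : mdot x (y - z) = mdot x y - mdot x z := by
  simp only [mdot, Pi.sub_apply]; ring

lemma mdot_smul_right (x y : Fin 3 → ℝ) (c : ℝ) : mdot x (c • y) = c * mdot x y := by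
  simp only [mdot, Pi.smul_apply, smul_eq_mul]; ring

lemma mdot_add_left (x y z : Fin 3 → ℝ) : mdot (x + y) z = mdot x z + mdot y z := by
  simp only [mdot_comm _ z, mdot_add_right]

lemma mdot_smul_left (x y : Fin 3 → ℝ) (c : ℝ) : mdot (c • x) y = c * mdot x y := by
  simp only [mdot_comm _ y, mdot_smul_right]

lemma mdot_eq_dotProduct (x y : Fin 3 → ℝ) :
    mdot x y = x ⬝ᵥ (diagonal ![1, 1, -1] *ᵥ y) := by
  simp [mdot, dotProduct, Fin.sum_univ_three, mulVec_diagonal, sub_eq_add_neg]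

lemma mul_diagonal_mulVec_eq_mdot (v : Fin 3 → Fin 3 → ℝ) (w : Fin 3 → ℝ) :
    (of v * diagonal ![1, 1, -1]) *ᵥ w = fun i => mdot (v i) w := by
  ext i; rw [← mulVec_mulVec, mdot_eq_dotProduct]; rfl

lemma mul_diagonal_mul_transpose_apply (v : Fin 3 → Fin 3 → ℝ) (i j : Fin 3) :
    (of v * diagonal ![1, 1, -1] * (of v)ᵀ : Matrix (Fin 3) (Fin 3) ℝ) i j =
      mdot (v i) (v j) := by
  change ((of v * diagonal ![1, 1, -1]) *ᵥ v j) i = _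
  rw [mul_diagonal_mulVec_eq_mdot]

structure IsPseudoOrthonormalFrame (T N M : Fin 3 → ℝ) : Prop where
  tt : mdot T T = 1
  nn : mdot N N = -1
  mm : mdot M M = 1
  tn : mdot T N = 0
  tm : mdot T M = 0
  nm : mdot N M = 0

namespace IsPseudoOrthonormalFrame

variable {T N M : Fin 3 → ℝ}

lemma eq_zero_of_mdot_eq_zero (h : IsPseudoOrthonormalFrame T N M) {w : Fin 3 → ℝ}
    (hT : mdot T w = 0) (hN : mdot N w = 0) (hM : mdot M w = 0) : w = 0 := by
  set F : Matrix (Fin 3) (Fin 3) ℝ := of ![T, N, M]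
  -- taking determinants in the Gram identity gives `(det F)² = 1`
  have hgram : F * diagonal ![1, 1, -1] * Fᵀ = diagonal ![1, -1, 1] := by
    ext i j
    rw [mul_diagonal_mul_transpose_apply]
    fin_cases i <;> fin_cases j <;>
      simp [mdot_comm N T, mdot_comm M T, mdot_comm M N, h.tt, h.nn, h.mm, h.tn, h.tm, h.nm]
  have hdet : (F * diagonal ![1, 1, -1]).det ≠ 0 := by
    have hF : F.det * F.det = 1 := by
      simpa [det_mul, Fin.prod_univ_three] using congrArg det hgram
    simpa [det_mul, Fin.prod_univ_three] using left_ne_zero_of_mul_eq_one hF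
  refine eq_zero_of_mulVec_eq_zero hdet ?_
  rw [mul_diagonal_mulVec_eq_mdot]
  ext i
  fin_cases i <;> assumption

lemma eq_expansion (h : IsPseudoOrthonormalFrame T N M) (w : Fin 3 → ℝ) :
    w = mdot T w • T - mdot N w • N + mdot M w • M := by
  refine sub_eq_zero.mp (h.eq_zero_of_mdot_eq_zero ?_ ?_ ?_) <;>
    simp only [mdot_sub_right, mdot_add_right, mdot_smul_right, mdot_comm N T, mdot_comm M T,
      mdot_comm M N, h.tt, h.nn, h.mm, h.tn, h.tm, h.nm] <;> ring

lemma mdot_self_eq (h : IsPseudoOrthonormalFrame T N M) (w : Fin 3 → ℝ) :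
    mdot w w = mdot w T ^ 2 - mdot w N ^ 2 + mdot w M ^ 2 := by
  calc mdot w w = mdot w (mdot T w • T - mdot N w • N + mdot M w • M) :=
        congrArg (mdot w) (h.eq_expansion w)
    _ = mdot w T ^ 2 - mdot w N ^ 2 + mdot w M ^ 2 := by
      simp only [mdot_add_right, mdot_sub_right, mdot_smul_right, mdot_comm T w, mdot_comm N w,
        mdot_comm M w]
      ring

end IsPseudoOrthonormalFrame

lemma HasDerivAt.mdot {f g : ℝ → Fin 3 → ℝ} {f' g' : Fin 3 → ℝ} {s : ℝ}
    (hf : HasDerivAt f f' s) (hg : HasDerivAt g g' s) :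
    HasDerivAt (fun x => mdot (f x) (g x)) (mdot f' (g s) + mdot (f s) g') s := by
  have h0 := (hasDerivAt_pi.mp hf 0).mul (hasDerivAt_pi.mp hg 0)
  have h1 := (hasDerivAt_pi.mp hf 1).mul (hasDerivAt_pi.mp hg 1)
  have h2 := (hasDerivAt_pi.mp hf 2).mul (hasDerivAt_pi.mp hg 2)
  exact ((h0.add h1).sub h2).congr_deriv (by simp only [_root_.mdot]; ring)

lemma HasDerivAt.eq_zero_of_forall_eq {E : Type*} [NormedAddCommGroup E] [NormedSpace ℝ E]
    {f : ℝ → E} {f' c : E} {s : ℝ} (hf : HasDerivAt f f' s) (hc : ∀ x, f x = c) : f' = 0 := by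
  obtain rfl : f = fun _ => c := funext hc
  exact hf.unique (hasDerivAt_const s c)

lemma eq_of_forall_hasDerivAt_zero {E : Type*} [NormedAddCommGroup E] [NormedSpace ℝ E]
    {f : ℝ → E} (hf : ∀ x, HasDerivAt f 0 x) (x y : ℝ) : f x = f y :=
  is_const_of_deriv_eq_zero (fun x => (hf x).differentiableAt) (fun x => (hf x).deriv) x y

structure IsRMFrame (α t n₁ n₂ : ℝ → Fin 3 → ℝ) (κ₁ κ₂ : ℝ → ℝ) : Prop where
  hasDerivAt_curve : ∀ s, HasDerivAt α (t s) s
  hasDerivAt_t : ∀ s, HasDerivAt t (-(κ₁ s) • n₁ s + κ₂ s • n₂ s) s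
  hasDerivAt_n₁ : ∀ s, HasDerivAt n₁ (-(κ₁ s) • t s) s
  hasDerivAt_n₂ : ∀ s, HasDerivAt n₂ (-(κ₂ s) • t s) s
  frame : ∀ s, IsPseudoOrthonormalFrame (t s) (n₁ s) (n₂ s)

namespace IsRMFrame

variable {α t n₁ n₂ : ℝ → Fin 3 → ℝ} {κ₁ κ₂ : ℝ → ℝ} {P : Fin 3 → ℝ}

lemma mdot_sub_tangent_eq_zero (h : IsRMFrame α t n₁ n₂ κ₁ κ₂)
    (hP : ∀ s, mdot (α s - P) (α s - P) = 0) (s : ℝ) : mdot (α s - P) (t s) = 0 := by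
  have hβ := (h.hasDerivAt_curve s).sub_const P
  have h0 := (hβ.mdot hβ).eq_zero_of_forall_eq hP
  rw [mdot_comm (t s)] at h0
  linarith

lemma one_sub_mul_add_mul_eq_zero (h : IsRMFrame α t n₁ n₂ κ₁ κ₂)
    (hP : ∀ s, mdot (α s - P) (α s - P) = 0) (s : ℝ) :
    1 - κ₁ s * mdot (α s - P) (n₁ s) + κ₂ s * mdot (α s - P) (n₂ s) = 0 := by
  have hβ := (h.hasDerivAt_curve s).sub_const P
  have h0 := (hβ.mdot (h.hasDerivAt_t s)).eq_zero_of_forall_eq (h.mdot_sub_tangent_eq_zero hP)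
  rw [(h.frame s).tt, mdot_add_right, mdot_smul_right, mdot_smul_right] at h0
  linarith

lemma mdot_sub_eq_of_hasDerivAt (h : IsRMFrame α t n₁ n₂ κ₁ κ₂)
    (hP : ∀ s, mdot (α s - P) (α s - P) = 0) {n : ℝ → Fin 3 → ℝ} {κ : ℝ → ℝ}
    (hn : ∀ s, HasDerivAt n (-(κ s) • t s) s) (htn : ∀ s, mdot (t s) (n s) = 0) (s : ℝ) :
    mdot (α s - P) (n s) = mdot (α 0 - P) (n 0) := by
  refine eq_of_forall_hasDerivAt_zero (f := fun y => mdot (α y - P) (n y)) (fun x => ?_) s 0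
  refine (((h.hasDerivAt_curve x).sub_const P).mdot (hn x)).congr_deriv ?_
  rw [mdot_smul_right, htn x, h.mdot_sub_tangent_eq_zero hP x]
  ring

lemma exists_relation_of_lightCone (h : IsRMFrame α t n₁ n₂ κ₁ κ₂)
    (hP : ∀ s, mdot (α s - P) (α s - P) = 0) :
    ∃ a b : ℝ, b ^ 2 = a ^ 2 ∧ ∀ s, 1 + a * κ₁ s + b * κ₂ s = 0 := by
  have hp := h.mdot_sub_eq_of_hasDerivAt hP h.hasDerivAt_n₁ (fun s => (h.frame s).tn)
  have hq := h.mdot_sub_eq_of_hasDerivAt hP h.hasDerivAt_n₂ (fun s => (h.frame s).tm)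
  refine ⟨-mdot (α 0 - P) (n₁ 0), mdot (α 0 - P) (n₂ 0), ?_, fun s => ?_⟩
  · have h0 := (h.frame 0).mdot_self_eq (α 0 - P)
    rw [hP 0, h.mdot_sub_tangent_eq_zero hP 0] at h0
    linear_combination -h0
  · have h1 := h.one_sub_mul_add_mul_eq_zero hP s
    rw [hp s, hq s] at h1
    linear_combination h1

lemma exists_lightCone_of_relation (h : IsRMFrame α t n₁ n₂ κ₁ κ₂) {a b : ℝ}
    (hab : b ^ 2 = a ^ 2) (hrel : ∀ s, 1 + a * κ₁ s + b * κ₂ s = 0) :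
    ∃ P : Fin 3 → ℝ, ∀ s, mdot (α s - P) (α s - P) = 0 := by
  set vertex : ℝ → Fin 3 → ℝ := fun s => α s - a • n₁ s - b • n₂ s
  have hvertex : ∀ s, HasDerivAt vertex 0 s := fun s => by
    refine (((h.hasDerivAt_curve s).sub ((h.hasDerivAt_n₁ s).const_smul a)).sub
      ((h.hasDerivAt_n₂ s).const_smul b)).congr_deriv ?_
    calc _ = (1 + a * κ₁ s + b * κ₂ s) • t s := by module
      _ = 0 := by rw [hrel s, zero_smul]
  refine ⟨vertex 0, fun s => ?_⟩
  have hαP : α s - vertex 0 = a • n₁ s + b • n₂ s := by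
    rw [← eq_of_forall_hasDerivAt_zero hvertex s 0]
    simp only [vertex]
    abel
  have hf := h.frame s
  rw [hαP]
  simp only [mdot_add_left, mdot_add_right, mdot_smul_left, mdot_smul_right, mdot_comm (n₂ s),
    hf.nn, hf.mm, hf.nm]
  linear_combination hab

lemma exists_lightCone_iff (h : IsRMFrame α t n₁ n₂ κ₁ κ₂) :
    (∃ P : Fin 3 → ℝ, ∀ s, mdot (α s - P) (α s - P) = 0) ↔
      ∃ a b : ℝ, b ^ 2 = a ^ 2 ∧ ∀ s, 1 + a * κ₁ s + b * κ₂ s = 0 :=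
  ⟨fun ⟨_, hP⟩ => h.exists_relation_of_lightCone hP,
    fun ⟨_, _, hab, hrel⟩ => h.exists_lightCone_of_relation hab hrel⟩

end IsRMFrame

lemma exists_sq_eq_sq_and_iff {κ₁ κ₂ : ℝ → ℝ} :
    (∃ a b : ℝ, b ^ 2 = a ^ 2 ∧ ∀ s, 1 + a * κ₁ s + b * κ₂ s = 0) ↔
      ∃ a : ℝ, (∀ s, 1 + a * κ₁ s + a * κ₂ s = 0) ∨ (∀ s, 1 + a * κ₁ s - a * κ₂ s = 0) := by
  constructor
  · rintro ⟨a, b, hab, hrel⟩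
    rcases sq_eq_sq_iff_eq_or_eq_neg.mp hab with hb | hb <;> subst b
    · exact ⟨a, .inl hrel⟩
    · exact ⟨a, .inr fun s => by linear_combination hrel s⟩
  · rintro ⟨a, hrel | hrel⟩
    · exact ⟨a, a, rfl, hrel⟩
    · exact ⟨a, -a, neg_sq a, fun s => by linear_combination hrel s⟩

/-- In `E₁³`, a `C²` regular spacelike unit-speed curve with RM frame `{t, n₁, n₂}`
(`n₁` timelike) lies on a light-cone `C²(P)` iff there is a constant `a₁` with
`1 + a₁κ₁ ± a₁κ₂ = 0`. -/
theorem stmt10 (α t n₁ n₂ : ℝ → Fin 3 → ℝ) (κ₁ κ₂ : ℝ → ℝ)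
    (hα : ContDiff ℝ 2 α)
    (ht : ∀ s, t s = deriv α s)
    (htt : ∀ s, mdot (t s) (t s) = 1)
    (hn₁n₁ : ∀ s, mdot (n₁ s) (n₁ s) = -1)
    (hn₂n₂ : ∀ s, mdot (n₂ s) (n₂ s) = 1)
    (htn₁ : ∀ s, mdot (t s) (n₁ s) = 0)
    (htn₂ : ∀ s, mdot (t s) (n₂ s) = 0)
    (hn₁n₂ : ∀ s, mdot (n₁ s) (n₂ s) = 0)
    (hdiff₁ : Differentiable ℝ n₁) (hdiff₂ : Differentiable ℝ n₂)
    (hdt : ∀ s, deriv t s = -(κ₁ s) • n₁ s + κ₂ s • n₂ s)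
    (hdn₁ : ∀ s, deriv n₁ s = -(κ₁ s) • t s)
    (hdn₂ : ∀ s, deriv n₂ s = -(κ₂ s) • t s) :
    (∃ P : Fin 3 → ℝ, ∀ s, mdot (α s - P) (α s - P) = 0) ↔
      ∃ a₁ : ℝ,
        (∀ s, 1 + a₁ * κ₁ s + a₁ * κ₂ s = 0) ∨
        (∀ s, 1 + a₁ * κ₁ s - a₁ * κ₂ s = 0) := by
  have htd : Differentiable ℝ t := funext ht ▸ hα.differentiable_deriv_two
  have hαd : Differentiable ℝ α := hα.differentiable (by norm_num)
  have h : IsRMFrame α t n₁ n₂ κ₁ κ₂ :=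
    { hasDerivAt_curve := fun s => ht s ▸ (hαd s).hasDerivAt
      hasDerivAt_t := fun s => hdt s ▸ (htd s).hasDerivAt
      hasDerivAt_n₁ := fun s => hdn₁ s ▸ (hdiff₁ s).hasDerivAt
      hasDerivAt_n₂ := fun s => hdn₂ s ▸ (hdiff₂ s).hasDerivAt
      frame := fun s => ⟨htt s, hn₁n₁ s, hn₂n₂ s, htn₁ s, htn₂ s, hn₁n₂ s⟩ }
  rw [h.exists_lightCone_iff, exists_sq_eq_sq_and_iff]
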